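/- The function F(θ,φ,φ̃,x₁) = (sin 2φ · sin 2θ)/(2√(4sin²φ + cos²φ·sin²2θ)) · √(1-x₁²) · sin φ̃, over θ,φ ∈ [-π/2,π/2], φ̃ ∈ [0,2π), x₁ ∈ [-1,1] (where defined), has maximum absolute value 1/3, attained when x₁ = 0, sin φ̃ = ±1, and the point corresponds to p = ±(1/√3)(0,0,1,0,1,1,0). -/

import Mathlib

/-!
Write s = sin φ, c = cos φ, t = sin 2θ. Since sin 2φ = 2sc, the bound |F| ≤ 1/3 reduces to
9 s²c²t² ≤ 4s² + c²t². With c² = 1 - s² both sides are affine in t² ∈ [0, 1]; at t² = 0 the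
inequality is 0 ≤ 4s², and at t² = 1 the difference is (3s² - 1)², which vanishes exactly when
sin²φ = 1/3. The maximum is therefore attained at θ = π/4, sin φ = 1/√3, φ̃ = π/2, x₁ = 0.
-/

noncomputable section

open Real

/-- Slant-angle cosine of a torus orbit, as a function of the parameters. -/
def slantF (theta phi phit x1 : ℝ) : ℝ :=
  (sin (2 * phi) * sin (2 * theta)) /
      (2 * Real.sqrt (4 * sin phi ^ 2 + cos phi ^ 2 * sin (2 * theta) ^ 2)) *
    Real.sqrt (1 - x1 ^ 2) * sin phit

theorem nine_mul_sq_le_of_sq_add_sq_eq_one {s c t : ℝ} (hsc : s ^ 2 + c ^ 2 = 1)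
    (ht : t ^ 2 ≤ 1) : (3 * (s * c * t)) ^ 2 ≤ 4 * s ^ 2 + c ^ 2 * t ^ 2 := by
  have hc : c ^ 2 = 1 - s ^ 2 := by linarith
  have hdiff : 4 * s ^ 2 + c ^ 2 * t ^ 2 - (3 * (s * c * t)) ^ 2
      = (3 * s ^ 2 - 1) ^ 2 * t ^ 2 + 4 * s ^ 2 * (1 - t ^ 2) := by
    rw [mul_pow, mul_pow, mul_pow, hc]; ring
  have ht' : 0 ≤ 1 - t ^ 2 := sub_nonneg.mpr ht
  rw [← sub_nonneg, hdiff]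
  positivity

theorem abs_sin_two_mul_mul_sin_div_le (theta phi : ℝ) :
    |sin (2 * phi) * sin (2 * theta) /
      (2 * √(4 * sin phi ^ 2 + cos phi ^ 2 * sin (2 * theta) ^ 2))| ≤ 1 / 3 := by
  set D := 4 * sin phi ^ 2 + cos phi ^ 2 * sin (2 * theta) ^ 2
  have hkey : |3 * (sin phi * cos phi * sin (2 * theta))| ≤ √D :=
    abs_le_sqrt (nine_mul_sq_le_of_sq_add_sq_eq_one (sin_sq_add_cos_sq phi) (sin_sq_le_one _))
  rw [abs_div, abs_of_nonneg (by positivity : (0 : ℝ) ≤ 2 * √D)]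
  refine div_le_of_le_mul₀ (by positivity) (by norm_num) ?_
  rw [sin_two_mul]
  calc |2 * sin phi * cos phi * sin (2 * theta)|
      = |2 / 3 * (3 * (sin phi * cos phi * sin (2 * theta)))| := by ring_nf
    _ = 2 / 3 * |3 * (sin phi * cos phi * sin (2 * theta))| := by
        rw [abs_mul, abs_of_pos (by norm_num : (0 : ℝ) < 2 / 3)]
    _ ≤ 2 / 3 * √D := by gcongr
    _ = 1 / 3 * (2 * √D) := by ring

theorem abs_slantF_le (theta phi phit x1 : ℝ) : |slantF theta phi phit x1| ≤ 1 / 3 := by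
  have hx1 : √(1 - x1 ^ 2) ≤ 1 := sqrt_le_one.mpr (sub_le_self _ (sq_nonneg x1))
  calc |slantF theta phi phit x1|
      = |sin (2 * phi) * sin (2 * theta) /
          (2 * √(4 * sin phi ^ 2 + cos phi ^ 2 * sin (2 * theta) ^ 2))| *
        √(1 - x1 ^ 2) * |sin phit| := by
        rw [slantF, abs_mul, abs_mul, abs_of_nonneg (sqrt_nonneg _)]
    _ ≤ 1 / 3 * 1 * 1 := by
        gcongr
        · exact abs_sin_two_mul_mul_sin_div_le theta phi
        · exact abs_sin_le_one phit
    _ = 1 / 3 := by norm_num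

theorem sin_arcsin_inv_sqrt_three : sin (arcsin (1 / √3)) = 1 / √3 := by
  have h3 : (1 : ℝ) ≤ √3 := one_le_sqrt.mpr (by norm_num)
  exact sin_arcsin (by linarith [one_div_nonneg.mpr (sqrt_nonneg 3)])
    (div_le_one_of_le₀ h3 (sqrt_nonneg 3))

theorem cos_arcsin_inv_sqrt_three : cos (arcsin (1 / √3)) = √2 / √3 := by
  rw [cos_arcsin, div_pow, sq_sqrt (by norm_num : (0 : ℝ) ≤ 3), ← sqrt_div (by norm_num)]
  norm_num

theorem sqrt_two_div_two_mul_sqrt_two_div_sqrt_three : √2 / 2 * (√2 / √3) = 1 / √3 := by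
  field_simp
  exact sq_sqrt (by norm_num)

theorem slantF_extremal : slantF (π / 4) (arcsin (1 / √3)) (π / 2) 0 = 1 / 3 := by
  have h3 : √3 ^ 2 = 3 := sq_sqrt (by norm_num)
  have h2 : √2 ^ 2 = 2 := sq_sqrt (by norm_num)
  have hD : 4 * (1 / √3) ^ 2 + (√2 / √3) ^ 2 * 1 ^ 2 = 2 := by
    rw [div_pow, div_pow, h3, h2]; norm_num
  rw [slantF, show 2 * (π / 4) = π / 2 by ring, sin_two_mul, sin_arcsin_inv_sqrt_three,
    cos_arcsin_inv_sqrt_three, sin_pi_div_two, hD, zero_pow two_ne_zero, sub_zero, sqrt_one]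
  field_simp
  rw [h3]

/-- The slant-angle cosine F has maximal absolute value 1/3, attained with x₁ = 0,
    sin φ̃ = ±1, at the parameters corresponding to p = ±(1/√3)(0,0,1,0,1,1,0). -/
theorem stmt18 :
    (∀ theta phi phit x1 : ℝ,
      theta ∈ Set.Icc (-(π / 2)) (π / 2) → phi ∈ Set.Icc (-(π / 2)) (π / 2) →
      phit ∈ Set.Ico 0 (2 * π) → x1 ∈ Set.Icc (-1 : ℝ) 1 →
      4 * sin phi ^ 2 + cos phi ^ 2 * sin (2 * theta) ^ 2 ≠ 0 →
      |slantF theta phi phit x1| ≤ 1 / 3) ∧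
    (∃ theta phi phit : ℝ,
      theta ∈ Set.Icc (-(π / 2)) (π / 2) ∧ phi ∈ Set.Icc (-(π / 2)) (π / 2) ∧
      phit ∈ Set.Ico 0 (2 * π) ∧
      |slantF theta phi phit 0| = 1 / 3 ∧ |sin phit| = 1 ∧
      ((sin theta * cos phi = 1 / Real.sqrt 3 ∧ sin phi = 1 / Real.sqrt 3 ∧
          cos theta * sin phit * cos phi = 1 / Real.sqrt 3 ∧
          cos theta * cos phit * cos phi = 0) ∨
        (sin theta * cos phi = -(1 / Real.sqrt 3) ∧ sin phi = -(1 / Real.sqrt 3) ∧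
          cos theta * sin phit * cos phi = -(1 / Real.sqrt 3) ∧
          cos theta * cos phit * cos phi = 0))) := by
  refine ⟨fun theta phi phit x1 _ _ _ _ _ ↦ abs_slantF_le theta phi phit x1,
    π / 4, arcsin (1 / √3), π / 2, ⟨by linarith [pi_pos], by linarith [pi_pos]⟩,
    arcsin_mem_Icc _, ⟨by positivity, by linarith [pi_pos]⟩, ?_, ?_, Or.inl ⟨?_, ?_, ?_, ?_⟩⟩
  · rw [slantF_extremal, abs_of_pos (by norm_num)]
  · rw [sin_pi_div_two, abs_one]
  · rw [sin_pi_div_four, cos_arcsin_inv_sqrt_three, sqrt_two_div_two_mul_sqrt_two_div_sqrt_three]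
  · exact sin_arcsin_inv_sqrt_three
  · rw [cos_pi_div_four, sin_pi_div_two, mul_one, cos_arcsin_inv_sqrt_three,
      sqrt_two_div_two_mul_sqrt_two_div_sqrt_three]
  · rw [cos_pi_div_two, mul_zero, zero_mul]
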